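/- arXiv:1612.09323 — 3 statements merged into one kernel-verified Lean document; each statement's English description precedes it below -/
import Mathlib

section
/- Let δ > 0 and h ∈ K, and set Ψ_h(x) = 1 + δ·h(x). Then for every x ≥ 0, ∫₀^x (1/Ψ_h(η)) · exp(−2∫₀^η ξ/Ψ_h(ξ) dξ) dη ≤ √(π(1+δ)) / 2. -/
open Real MeasureTheory Filter

/-- `Ψ_h(x) = 1 + δ·h(x)`. -/
noncomputable def Psi (δ : ℝ) (h : ℝ → ℝ) (x : ℝ) : ℝ := 1 + δ * h x

/-- The integrand `(1/Ψ_h(η)) · exp(−2∫₀^η ξ/Ψ_h(ξ) dξ)`. -/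
noncomputable def F (δ : ℝ) (h : ℝ → ℝ) (η : ℝ) : ℝ :=
  (1 / Psi δ h η) * Real.exp (-2 * ∫ ξ in (0:ℝ)..η, ξ / Psi δ h ξ)

/-- The full integral `∫₀^∞ (1/Ψ_h(η)) · exp(−2∫₀^η ξ/Ψ_h(ξ) dξ) dη`. -/
noncomputable def Itot (δ : ℝ) (h : ℝ → ℝ) : ℝ := ∫ η in Set.Ioi (0:ℝ), F δ h η

/-- The constant `C_h`. -/
noncomputable def Ch (δ : ℝ) (h : ℝ → ℝ) : ℝ := (Itot δ h)⁻¹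

/-- Membership in the set `K`: analytic on `[0,∞)`, `0 ≤ h ≤ 1` there,
`h(0) = 0` and `h(x) → 1` as `x → ∞`. -/
def MemK (h : ℝ → ℝ) : Prop :=
  AnalyticOnNhd ℝ h (Set.Ici 0) ∧ (∀ x ≥ 0, 0 ≤ h x ∧ h x ≤ 1) ∧ h 0 = 0 ∧
    Tendsto h atTop (nhds 1)

/-- Supremum norm over `[0,∞)`. -/
noncomputable def supNorm (f : ℝ → ℝ) : ℝ := ⨆ x : Set.Ici (0:ℝ), |f (x : ℝ)|

/-!
Since `1 ≤ Ψ_h ≤ 1 + δ` on `[0, ∞)`, the inner integral is at least `η² / (2(1 + δ))`,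
so the integrand is dominated by the Gaussian `exp(-η² / (1 + δ))`, whose integral over
`(0, ∞)` is `√(π(1 + δ)) / 2`.
-/

open Set

lemma one_le_Psi {δ : ℝ} {h : ℝ → ℝ} {ξ : ℝ} (hδ : 0 ≤ δ) (hξ : 0 ≤ h ξ) :
    1 ≤ Psi δ h ξ := by
  unfold Psi
  nlinarith

lemma Psi_le_one_add {δ : ℝ} {h : ℝ → ℝ} {ξ : ℝ} (hδ : 0 ≤ δ) (hξ : h ξ ≤ 1) :
    Psi δ h ξ ≤ 1 + δ := by
  unfold Psi
  nlinarith

lemma sq_div_le_integral_id_div {g : ℝ → ℝ} {c η : ℝ} (hc : 0 < c) (hη : 0 ≤ η)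
    (hg : ContinuousOn g (Icc 0 η)) (hg_pos : ∀ ξ ∈ Icc 0 η, 0 < g ξ)
    (hg_le : ∀ ξ ∈ Icc 0 η, g ξ ≤ c) :
    η ^ 2 / (2 * c) ≤ ∫ ξ in (0:ℝ)..η, ξ / g ξ := by
  have hint : IntervalIntegrable (fun ξ => ξ / g ξ) volume 0 η := by
    apply ContinuousOn.intervalIntegrable
    rw [uIcc_of_le hη]
    exact continuousOn_id.div hg fun ξ hξ => (hg_pos ξ hξ).ne'
  calc η ^ 2 / (2 * c) = ∫ ξ in (0:ℝ)..η, ξ / c := by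
        rw [intervalIntegral.integral_div, integral_id]
        field_simp
        ring
    _ ≤ ∫ ξ in (0:ℝ)..η, ξ / g ξ :=
        intervalIntegral.integral_mono_on hη ((continuous_id.div_const _).intervalIntegrable _ _)
          hint fun ξ hξ => div_le_div_of_nonneg_left hξ.1 (hg_pos ξ hξ) (hg_le ξ hξ)

lemma F_le_exp_neg_sq {δ : ℝ} {h : ℝ → ℝ} {η : ℝ} (hδ : 0 ≤ δ)
    (hh : ContinuousOn h (Ici 0)) (hh_bdd : ∀ x ≥ 0, 0 ≤ h x ∧ h x ≤ 1) (hη : 0 ≤ η) :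
    F δ h η ≤ exp (-(1 + δ)⁻¹ * η ^ 2) := by
  have hΨ_one : 1 ≤ Psi δ h η := one_le_Psi hδ (hh_bdd η hη).1
  have hinner : η ^ 2 / (2 * (1 + δ)) ≤ ∫ ξ in (0:ℝ)..η, ξ / Psi δ h ξ :=
    sq_div_le_integral_id_div (by linarith) hη
      (continuousOn_const.add (continuousOn_const.mul (hh.mono fun ξ hξ => hξ.1)))
      (fun ξ hξ => one_pos.trans_le (one_le_Psi hδ (hh_bdd ξ hξ.1).1))
      (fun ξ hξ => Psi_le_one_add hδ (hh_bdd ξ hξ.1).2)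
  have hexp : exp (-2 * ∫ ξ in (0:ℝ)..η, ξ / Psi δ h ξ) ≤ exp (-(1 + δ)⁻¹ * η ^ 2) := by
    rw [exp_le_exp]
    calc -2 * ∫ ξ in (0:ℝ)..η, ξ / Psi δ h ξ ≤ -2 * (η ^ 2 / (2 * (1 + δ))) := by linarith
      _ = -(1 + δ)⁻¹ * η ^ 2 := by field_simp
  calc F δ h η ≤ 1 * exp (-(1 + δ)⁻¹ * η ^ 2) :=
        mul_le_mul ((div_le_one (one_pos.trans_le hΨ_one)).2 hΨ_one) hexp (exp_pos _).le
          zero_le_one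
    _ = exp (-(1 + δ)⁻¹ * η ^ 2) := one_mul _

lemma intervalIntegral_le_integral_Ioi_of_le {f g : ℝ → ℝ} {x : ℝ} (hx : 0 ≤ x)
    (hfg : ∀ η ∈ Icc 0 x, f η ≤ g η) (hg : IntegrableOn g (Ioi 0)) (hg_nonneg : ∀ η, 0 ≤ g η) :
    ∫ η in (0:ℝ)..x, f η ≤ ∫ η in Ioi 0, g η := by
  by_cases hf : IntervalIntegrable f volume 0 x
  · calc ∫ η in (0:ℝ)..x, f η ≤ ∫ η in (0:ℝ)..x, g η :=
          intervalIntegral.integral_mono_on hx hf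
            ((intervalIntegrable_iff_integrableOn_Ioc_of_le hx).2
              (hg.mono_set Ioc_subset_Ioi_self)) hfg
      _ ≤ ∫ η in Ioi 0, g η := by
          rw [intervalIntegral.integral_of_le hx]
          exact setIntegral_mono_set hg (Eventually.of_forall hg_nonneg)
            Ioc_subset_Ioi_self.eventuallyLE
  · rw [intervalIntegral.integral_undef hf]
    exact integral_nonneg hg_nonneg

lemma integral_Ioi_exp_neg_inv_mul_sq (c : ℝ) :
    ∫ η in Ioi 0, exp (-c⁻¹ * η ^ 2) = √(π * c) / 2 := by
  rw [integral_gaussian_Ioi, div_inv_eq_mul]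

theorem integral_upper_bound (δ : ℝ) (hδ : 0 < δ)
    (h : ℝ → ℝ) (hK : MemK h) (x : ℝ) (hx : 0 ≤ x) :
    ∫ η in (0:ℝ)..x, F δ h η ≤ Real.sqrt (π * (1 + δ)) / 2 := by
  obtain ⟨hh_an, hh_bdd, -, -⟩ := hK
  have hc : (0:ℝ) < 1 + δ := by linarith
  rw [← integral_Ioi_exp_neg_inv_mul_sq (1 + δ)]
  exact intervalIntegral_le_integral_Ioi_of_le hx
    (fun η hη => F_le_exp_neg_sq hδ.le hh_an.continuousOn hh_bdd hη.1)
    (integrable_exp_neg_mul_sq (inv_pos.2 hc)).integrableOn fun η => (exp_pos _).le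
end

section
/- Let δ > 0 and y ∈ K. Then y is a solution of the nonlinear boundary value problem [(1 + δ·y(x))·y′(x)]′ + 2x·y′(x) = 0 on (0,∞), y(0) = 0, y(x) → 1 as x → ∞, if and only if y is a fixed point of the operator τ, i.e. y(x) = C_y ∫₀^x (1/Ψ_y(η))·exp(−2∫₀^η ξ/Ψ_y(ξ) dξ) dη for all x ≥ 0, where Ψ_y(x) = 1 + δ·y(x) and C_y = (∫₀^∞ (1/Ψ_y(η))·exp(−2∫₀^η ξ/Ψ_y(ξ) dξ) dη)^{−1}. -/
open Real MeasureTheory Filter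

open Topology

/-- Auxiliary: the inner integral `∫₀^u ξ/Ψ_h(ξ) dξ`. -/
noncomputable def Aint (δ : ℝ) (h : ℝ → ℝ) (u : ℝ) : ℝ := ∫ ξ in (0:ℝ)..u, ξ / Psi δ h ξ

lemma F_eq (δ : ℝ) (h : ℝ → ℝ) (η : ℝ) :
    F δ h η = (1 / Psi δ h η) * Real.exp (-2 * Aint δ h η) := rfl

theorem fixed_point_characterization (δ : ℝ) (hδ : 0 < δ)
    (y : ℝ → ℝ) (hK : MemK y) :
    ((∀ x ∈ Set.Ioi (0:ℝ),
        HasDerivAt (fun t => (1 + δ * y t) * deriv y t) (-(2 * x * deriv y x)) x) ∧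
      y 0 = 0 ∧ Tendsto y atTop (nhds 1)) ↔
    (∀ x ≥ (0:ℝ), y x = Ch δ y * ∫ η in (0:ℝ)..x, F δ y η) := by
  obtain ⟨han, h01, hy0, hylim⟩ := hK
  have hΨ1 : ∀ b ≥ (0:ℝ), 1 ≤ Psi δ y b := by
    intro b hb
    have h1 := (h01 b hb).1
    have h2 : 0 ≤ δ * y b := mul_nonneg hδ.le h1
    simp only [Psi]; linarith
  have hΨpos : ∀ b ≥ (0:ℝ), 0 < Psi δ y b := fun b hb => lt_of_lt_of_le one_pos (hΨ1 b hb)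
  have hΨne : ∀ b ≥ (0:ℝ), Psi δ y b ≠ 0 := fun b hb => (hΨpos b hb).ne'
  -- the open set U on which everything is continuous
  have hOopen : IsOpen {t : ℝ | AnalyticAt ℝ y t} := isOpen_analyticAt ℝ y
  have hΨcA : ∀ t : ℝ, AnalyticAt ℝ y t → ContinuousAt (Psi δ y) t := by
    intro t ht
    exact continuousAt_const.add (continuousAt_const.mul ht.continuousAt)
  set U : Set ℝ := {t : ℝ | AnalyticAt ℝ y t} ∩ (Psi δ y) ⁻¹' {(0:ℝ)}ᶜ with hU_def
  have hUopen : IsOpen U := by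
    apply ContinuousOn.isOpen_inter_preimage _ hOopen isOpen_compl_singleton
    exact fun t ht => (hΨcA t ht).continuousWithinAt
  have hIciU : Set.Ici (0:ℝ) ⊆ U := fun t ht => ⟨han t ht, hΨne t ht⟩
  have hfC : ∀ t ∈ U, ContinuousAt (fun ξ : ℝ => ξ / Psi δ y ξ) t := by
    intro t ht
    exact continuousAt_id.div (hΨcA t ht.1) ht.2
  have hfmeas : ∀ b ∈ U, StronglyMeasurableAtFilter (fun ξ : ℝ => ξ / Psi δ y ξ) (𝓝 b) volume :=
    ContinuousAt.stronglyMeasurableAtFilter hUopen hfC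
  have hint : ∀ b ≥ (0:ℝ), IntervalIntegrable (fun ξ : ℝ => ξ / Psi δ y ξ) volume 0 b := by
    intro b hb
    apply ContinuousOn.intervalIntegrable
    intro t ht
    rw [Set.uIcc_of_le hb] at ht
    exact (hfC t (hIciU ht.1)).continuousWithinAt
  have hA' : ∀ b ≥ (0:ℝ), HasDerivAt (Aint δ y) (b / Psi δ y b) b := fun b hb =>
    intervalIntegral.integral_hasDerivAt_right (hint b hb) (hfmeas b (hIciU hb))
      (hfC b (hIciU hb))
  have hFC : ∀ b ≥ (0:ℝ), ContinuousAt (F δ y) b := by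
    intro b hb
    have h1 : ContinuousAt (Psi δ y) b := hΨcA b (han b hb)
    have h2 : ContinuousAt (Aint δ y) b := (hA' b hb).continuousAt
    have : ContinuousAt (fun η => (1 / Psi δ y η) * Real.exp (-2 * Aint δ y η)) b :=
      (continuousAt_const.div h1 (hΨne b hb)).mul
        (Real.continuous_exp.continuousAt.comp (continuousAt_const.mul h2))
    exact this
  have hFpos : ∀ b ≥ (0:ℝ), 0 < F δ y b := by
    intro b hb
    rw [F_eq]
    exact mul_pos (div_pos one_pos (hΨpos b hb)) (Real.exp_pos _)
  have hFint : ∀ x ≥ (0:ℝ), IntervalIntegrable (F δ y) volume 0 x := by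
    intro x hx
    apply ContinuousOn.intervalIntegrable
    intro t ht
    rw [Set.uIcc_of_le hx] at ht
    exact (hFC t ht.1).continuousWithinAt
  have hG' : ∀ x > (0:ℝ), HasDerivAt (fun u => ∫ η in (0:ℝ)..u, F δ y η) (F δ y x) x := by
    intro x hx
    exact intervalIntegral.integral_hasDerivAt_right (hFint x hx.le)
      ((continuousOn_of_forall_continuousAt (fun t (ht : t ∈ Set.Ioi (0:ℝ)) =>
        hFC t ht.le)).stronglyMeasurableAtFilter isOpen_Ioi x hx) (hFC x hx.le)
  constructor
  · rintro ⟨hode, -, -⟩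
    intro x hx
    set c := deriv y 0 with hc_def
    set w : ℝ → ℝ := fun t => ((1 + δ * y t) * deriv y t) * Real.exp (2 * Aint δ y t)
      with hw_def
    have hw' : ∀ t > (0:ℝ), HasDerivAt w 0 t := by
      intro t ht
      have h1 : HasDerivAt (fun s => (1 + δ * y s) * deriv y s) (-(2 * t * deriv y t)) t :=
        hode t ht
      have h2 : HasDerivAt (fun s => Real.exp (2 * Aint δ y s))
          (Real.exp (2 * Aint δ y t) * (2 * (t / Psi δ y t))) t :=
        (((hA' t ht.le).const_mul 2)).exp
      have h3 := h1.mul h2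
      convert h3 using 1
      · rfl
      · rfl
      · rfl
      have hne : (1 + δ * y t) ≠ 0 := hΨne t ht.le
      have hpsi : Psi δ y t = 1 + δ * y t := rfl
      rw [hpsi]
      field_simp
      ring
    have hwc0 : ContinuousAt w 0 := by
      have hd : ContinuousAt (deriv y) 0 := ((han.deriv) 0 Set.self_mem_Ici).continuousAt
      have hyc : ContinuousAt y 0 := (han 0 Set.self_mem_Ici).continuousAt
      have hAc : ContinuousAt (Aint δ y) 0 := (hA' 0 le_rfl).continuousAt
      exact ((continuousAt_const.add (continuousAt_const.mul hyc)).mul hd).mul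
        (Real.continuous_exp.continuousAt.comp (continuousAt_const.mul hAc))
    have hwconst : ∀ t ≥ (0:ℝ), w t = w 0 := by
      intro t ht
      rcases eq_or_lt_of_le ht with h | h
      · rw [← h]
      have key : ∀ a, 0 < a → a ≤ t → w t = w a := by
        intro a ha hat
        have := constant_of_has_deriv_right_zero (f := w) (a := a) (b := t)
          (fun s hs => ((hw' s (lt_of_lt_of_le ha hs.1)).continuousAt).continuousWithinAt)
          (fun s hs => (hw' s (lt_of_lt_of_le ha hs.1)).hasDerivWithinAt)
        exact this t ⟨hat, le_refl t⟩
      have l1 : Tendsto w (𝓝[>] (0:ℝ)) (𝓝 (w 0)) := hwc0.continuousWithinAt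
      have l2 : Tendsto w (𝓝[>] (0:ℝ)) (𝓝 (w t)) := by
        apply Tendsto.congr' _ tendsto_const_nhds
        filter_upwards [Ioo_mem_nhdsGT_of_mem ⟨le_refl (0:ℝ), h⟩] with a ha
        exact key a ha.1 ha.2.le
      exact (tendsto_nhds_unique l1 l2).symm
    have hA0 : Aint δ y 0 = 0 := intervalIntegral.integral_same
    have hw0 : w 0 = c := by
      rw [hw_def]
      simp [hA0, hy0, hc_def]
    have hdy : ∀ t ≥ (0:ℝ), deriv y t = c * F δ y t := by
      intro t ht
      have h1 : w t = c := (hwconst t ht).trans hw0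
      rw [hw_def] at h1
      simp only at h1
      have hE : Real.exp (2 * Aint δ y t) ≠ 0 := (Real.exp_pos _).ne'
      have hne : (1 + δ * y t) ≠ 0 := hΨne t ht
      have h2 : Real.exp (-2 * Aint δ y t) = (Real.exp (2 * Aint δ y t))⁻¹ := by
        rw [← Real.exp_neg]; ring_nf
      rw [F_eq, h2]
      have hpsi : Psi δ y t = 1 + δ * y t := rfl
      rw [hpsi]
      field_simp
      linarith [h1]
    have hyx : ∀ t ≥ (0:ℝ), y t = c * ∫ η in (0:ℝ)..t, F δ y η := by
      intro t ht
      have hF : ∀ s ∈ Set.uIcc (0:ℝ) t, HasDerivAt y (c * F δ y s) s := by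
        intro s hs
        rw [Set.uIcc_of_le ht] at hs
        have hds : HasDerivAt y (deriv y s) s := ((han s hs.1).differentiableAt).hasDerivAt
        rwa [hdy s hs.1] at hds
      have hInt : IntervalIntegrable (fun s => c * F δ y s) volume 0 t :=
        (hFint t ht).const_mul c
      have heq := intervalIntegral.integral_eq_sub_of_hasDerivAt hF hInt
      rw [hy0, intervalIntegral.integral_const_mul] at heq
      linarith [heq]
    have hc : 0 < c := by
      have hev : ∀ᶠ t in atTop, 1/2 < y t :=
        hylim.eventually (eventually_gt_nhds (by norm_num))
      obtain ⟨t, ht1, ht2⟩ := (hev.and (eventually_ge_atTop (1:ℝ))).exists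
      have hI : 0 ≤ ∫ η in (0:ℝ)..t, F δ y η :=
        intervalIntegral.integral_nonneg (by linarith) (fun s hs => (hFpos s hs.1).le)
      have heq := hyx t (by linarith)
      by_contra hcon
      push_neg at hcon
      nlinarith
    have hbound : ∀ t ≥ (0:ℝ), ∫ η in (0:ℝ)..t, F δ y η ≤ 1/c := by
      intro t ht
      have h1 := hyx t ht
      have h2 := (h01 t ht).2
      rw [le_div_iff₀ hc]
      nlinarith
    have hIntegrable : IntegrableOn (F δ y) (Set.Ioi 0) volume := by
      apply integrableOn_Ioi_of_intervalIntegral_norm_bounded (1/c) 0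
        (b := fun i : ℝ => i) (l := atTop) ?_ tendsto_id ?_
      · intro i
        rcases le_or_gt 0 i with hi | hi
        · exact (hFint i hi).1
        · rw [Set.Ioc_eq_empty (not_lt.mpr hi.le)]
          exact integrableOn_empty
      · filter_upwards [eventually_ge_atTop (0:ℝ)] with i hi
        have : ∀ s ∈ Set.uIcc (0:ℝ) i, ‖F δ y s‖ = F δ y s := by
          intro s hs
          rw [Set.uIcc_of_le hi] at hs
          exact Real.norm_of_nonneg (hFpos s hs.1).le
        rw [intervalIntegral.integral_congr this]
        exact hbound i hi
    have hlim : Tendsto (fun t => ∫ η in (0:ℝ)..t, F δ y η) atTop (𝓝 (Itot δ y)) :=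
      intervalIntegral_tendsto_integral_Ioi 0 hIntegrable tendsto_id
    have hcI : c * Itot δ y = 1 := by
      have l1 : Tendsto (fun t => c * ∫ η in (0:ℝ)..t, F δ y η) atTop (𝓝 (c * Itot δ y)) :=
        hlim.const_mul c
      have l2 : Tendsto (fun t => c * ∫ η in (0:ℝ)..t, F δ y η) atTop (𝓝 1) := by
        apply Tendsto.congr' _ hylim
        filter_upwards [eventually_ge_atTop (0:ℝ)] with t ht using hyx t ht
      exact tendsto_nhds_unique l1 l2
    have hCh : Ch δ y = c := by
      have hI : Itot δ y = c⁻¹ := by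
        field_simp
        linarith [hcI]
      rw [Ch, hI, inv_inv]
    rw [hCh]
    exact hyx x hx
  · intro hfix
    refine ⟨?_, hy0, hylim⟩
    intro x hx
    have hx' : (0:ℝ) < x := hx
    have hdy : ∀ t > (0:ℝ), HasDerivAt y (Ch δ y * F δ y t) t := by
      intro t ht
      have hG : HasDerivAt (fun u => Ch δ y * ∫ η in (0:ℝ)..u, F δ y η)
          (Ch δ y * F δ y t) t := (hG' t ht).const_mul _
      have heq : y =ᶠ[𝓝 t] fun u => Ch δ y * ∫ η in (0:ℝ)..u, F δ y η := by
        filter_upwards [IsOpen.mem_nhds isOpen_Ioi ht] with u hu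
        exact hfix u (le_of_lt hu)
      exact hG.congr_of_eventuallyEq heq
    have hderiv_eq : ∀ t > (0:ℝ), deriv y t = Ch δ y * F δ y t := fun t ht => (hdy t ht).deriv
    have hPeq : (fun t => (1 + δ * y t) * deriv y t)
        =ᶠ[𝓝 x] fun t => Ch δ y * Real.exp (-2 * Aint δ y t) := by
      filter_upwards [IsOpen.mem_nhds isOpen_Ioi hx'] with t ht
      rw [hderiv_eq t ht, F_eq]
      have hne : (1 + δ * y t) ≠ 0 := hΨne t ht.le
      have hpsi : Psi δ y t = 1 + δ * y t := rfl
      rw [hpsi]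
      field_simp
    have hE' : HasDerivAt (fun t => Ch δ y * Real.exp (-2 * Aint δ y t))
        (Ch δ y * (Real.exp (-2 * Aint δ y x) * (-2 * (x / Psi δ y x)))) x :=
      (((hA' x hx'.le).const_mul (-2)).exp).const_mul (Ch δ y)
    have hmain := hE'.congr_of_eventuallyEq hPeq
    convert hmain using 1
    · rfl
    · rfl
    rw [hderiv_eq x hx', F_eq]
    ring
end

section
/- Let δ₁ be the unique positive solution of (x/2)·(1+x)^{3/2}·(3+x)·[1 + (1+x)^{3/2}] = 1, and let 0 < δ < δ₁. Then the operator τ : K → K defined by τ(h)(x) = C_h ∫₀^x (1/Ψ_h(η))·exp(−2∫₀^η ξ/Ψ_h(ξ) dξ) dη is a contraction with respect to the supremum norm: there exists a constant 0 ≤ γ < 1 (namely γ = g(δ)) such that ‖τ(h₁) − τ(h₂)‖_∞ ≤ γ·‖h₁ − h₂‖_∞ for all h₁, h₂ ∈ K. -/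
open Real MeasureTheory Filter

open Set intervalIntegral

section Aux
variable {δ : ℝ} {h h₁ h₂ : ℝ → ℝ}

lemma psi_one_le (hδ : 0 < δ) (hK : MemK h) {x : ℝ} (hx : 0 ≤ x) : 1 ≤ Psi δ h x := by
  have := (hK.2.1 x hx).1
  simp only [Psi]; nlinarith

lemma psi_le (hδ : 0 < δ) (hK : MemK h) {x : ℝ} (hx : 0 ≤ x) : Psi δ h x ≤ 1 + δ := by
  have := (hK.2.1 x hx).2
  simp only [Psi]; nlinarith

lemma psi_pos (hδ : 0 < δ) (hK : MemK h) {x : ℝ} (hx : 0 ≤ x) : 0 < Psi δ h x :=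
  by linarith [psi_one_le hδ hK hx]

lemma continuousOn_psi (hK : MemK h) : ContinuousOn (Psi δ h) (Ici 0) := by
  intro x hx
  exact (continuousAt_const.add (continuousAt_const.mul (hK.1 x hx).continuousAt)).continuousWithinAt

lemma continuousOn_integrand (hδ : 0 < δ) (hK : MemK h) :
    ContinuousOn (fun ξ => ξ / Psi δ h ξ) (Ici 0) :=
  continuousOn_id.div (continuousOn_psi hK) (fun x hx => (psi_pos hδ hK hx).ne')

lemma intervalIntegrable_integrand (hδ : 0 < δ) (hK : MemK h) {η : ℝ} (hη : 0 ≤ η) :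
    IntervalIntegrable (fun ξ => ξ / Psi δ h ξ) volume 0 η :=
  ((continuousOn_integrand hδ hK).mono (by rw [uIcc_of_le hη]; exact Icc_subset_Ici_self)).intervalIntegrable

end Aux

section Aux2
variable {δ : ℝ} {h h₁ h₂ : ℝ → ℝ}

lemma continuousOn_Ici_of_Icc {f : ℝ → ℝ} (H : ∀ b : ℝ, 0 < b → ContinuousOn f (Icc 0 b)) :
    ContinuousOn f (Ici 0) := by
  intro x hx
  have hx' : (0:ℝ) ≤ x := hx
  have hb : (0:ℝ) < x + 1 := by linarith
  have h1 : ContinuousWithinAt f (Icc 0 (x+1)) x := H (x+1) hb x ⟨hx', by linarith⟩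
  refine h1.mono_of_mem_nhdsWithin ?_
  rw [← Ici_inter_Iic]
  exact inter_mem_nhdsWithin _ (Iic_mem_nhds (by linarith))

lemma continuousOn_A (hδ : 0 < δ) (hK : MemK h) :
    ContinuousOn (fun η => ∫ ξ in (0:ℝ)..η, ξ / Psi δ h ξ) (Ici 0) := by
  refine continuousOn_Ici_of_Icc (fun b hb => ?_)
  have : uIcc (0:ℝ) b = Icc 0 b := uIcc_of_le hb.le
  have hint : IntegrableOn (fun ξ => ξ / Psi δ h ξ) (uIcc 0 b) volume := by
    rw [this]
    exact ((continuousOn_integrand hδ hK).mono Icc_subset_Ici_self).integrableOn_compact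
      isCompact_Icc
  simpa [this] using intervalIntegral.continuousOn_primitive_interval hint

lemma continuousOn_F (hδ : 0 < δ) (hK : MemK h) : ContinuousOn (F δ h) (Ici 0) := by
  unfold F
  exact (continuousOn_const.div (continuousOn_psi hK) fun x hx => (psi_pos hδ hK hx).ne').mul
    (((continuousOn_A hδ hK).const_smul (-2 : ℝ)).rexp)

end Aux2

section Aux3
variable {δ : ℝ} {h h₁ h₂ : ℝ → ℝ}

lemma A_le (hδ : 0 < δ) (hK : MemK h) {η : ℝ} (hη : 0 ≤ η) :
    (∫ ξ in (0:ℝ)..η, ξ / Psi δ h ξ) ≤ η ^ 2 / 2 := by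
  have : (∫ ξ in (0:ℝ)..η, ξ / Psi δ h ξ) ≤ ∫ ξ in (0:ℝ)..η, ξ := by
    refine integral_mono_on hη (intervalIntegrable_integrand hδ hK hη)
      intervalIntegrable_id (fun x hx => ?_)
    have h1 : 1 ≤ Psi δ h x := psi_one_le hδ hK hx.1
    rw [div_le_iff₀ (by linarith)]
    nlinarith [hx.1]
  simpa [integral_id] using this

lemma le_A (hδ : 0 < δ) (hK : MemK h) {η : ℝ} (hη : 0 ≤ η) :
    η ^ 2 / (2 * (1 + δ)) ≤ ∫ ξ in (0:ℝ)..η, ξ / Psi δ h ξ := by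
  have : (∫ ξ in (0:ℝ)..η, ξ / (1 + δ)) ≤ ∫ ξ in (0:ℝ)..η, ξ / Psi δ h ξ := by
    refine integral_mono_on hη
      (intervalIntegrable_id.div_const _)
      (intervalIntegrable_integrand hδ hK hη) (fun x hx => ?_)
    have h1 : 0 < Psi δ h x := psi_pos hδ hK hx.1
    have h2 : Psi δ h x ≤ 1 + δ := psi_le hδ hK hx.1
    apply div_le_div_of_nonneg_left hx.1 h1 h2
  have heq : (∫ ξ in (0:ℝ)..η, ξ / (1 + δ)) = η ^ 2 / (2 * (1 + δ)) := by
    rw [intervalIntegral.integral_div (μ := volume), integral_id]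
    field_simp; ring
  linarith [heq ▸ this]

end Aux3

section Aux4
variable {δ : ℝ} {h h₁ h₂ : ℝ → ℝ}

lemma F_nonneg (hδ : 0 < δ) (hK : MemK h) {η : ℝ} (hη : 0 ≤ η) : 0 ≤ F δ h η := by
  unfold F
  have := psi_pos hδ hK hη
  positivity

lemma F_le (hδ : 0 < δ) (hK : MemK h) {η : ℝ} (hη : 0 ≤ η) :
    F δ h η ≤ Real.exp (-(1 + δ)⁻¹ * η ^ 2) := by
  unfold F
  have h1 : 1 ≤ Psi δ h η := psi_one_le hδ hK hη
  have h2 : (1:ℝ) / Psi δ h η ≤ 1 := by rw [div_le_one (by linarith)]; exact h1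
  have h3 : Real.exp (-2 * ∫ ξ in (0:ℝ)..η, ξ / Psi δ h ξ) ≤ Real.exp (-(1 + δ)⁻¹ * η ^ 2) := by
    apply Real.exp_le_exp.2
    have := le_A hδ hK hη
    have hc : (0:ℝ) < 1 + δ := by linarith
    rw [neg_mul, neg_mul, neg_le_neg_iff]
    have heq : (1 + δ)⁻¹ * η ^ 2 = 2 * (η ^ 2 / (2 * (1 + δ))) := by field_simp
    rw [heq]
    linarith
  calc (1 / Psi δ h η) * Real.exp (-2 * ∫ ξ in (0:ℝ)..η, ξ / Psi δ h ξ)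
      ≤ 1 * Real.exp (-(1 + δ)⁻¹ * η ^ 2) := by
        apply mul_le_mul h2 h3 (Real.exp_pos _).le one_pos.le
    _ = _ := one_mul _

lemma le_F (hδ : 0 < δ) (hK : MemK h) {η : ℝ} (hη : 0 ≤ η) :
    (1 + δ)⁻¹ * Real.exp (-1 * η ^ 2) ≤ F δ h η := by
  unfold F
  have h1 : 0 < Psi δ h η := psi_pos hδ hK hη
  have h2 : Psi δ h η ≤ 1 + δ := psi_le hδ hK hη
  have h2' : (1 + δ)⁻¹ ≤ 1 / Psi δ h η := by
    rw [le_div_iff₀ h1, inv_mul_le_iff₀ (by linarith)]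
    linarith
  have h3 : Real.exp (-1 * η ^ 2) ≤ Real.exp (-2 * ∫ ξ in (0:ℝ)..η, ξ / Psi δ h ξ) := by
    apply Real.exp_le_exp.2
    have := A_le hδ hK hη
    nlinarith
  apply mul_le_mul h2' h3 (Real.exp_pos _).le (by positivity)

lemma abs_le_supNorm (hK₁ : MemK h₁) (hK₂ : MemK h₂) {x : ℝ} (hx : 0 ≤ x) :
    |h₁ x - h₂ x| ≤ supNorm (h₁ - h₂) := by
  have hbdd : BddAbove (Set.range fun y : Set.Ici (0:ℝ) => |(h₁ - h₂) (y:ℝ)|) := by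
    refine ⟨1, fun v hv => ?_⟩
    obtain ⟨y, rfl⟩ := hv
    have a1 := hK₁.2.1 y y.2
    have a2 := hK₂.2.1 y y.2
    simp only [Pi.sub_apply]
    rw [abs_le]; constructor <;> linarith
  have := le_ciSup hbdd ⟨x, hx⟩
  simpa [supNorm] using this

lemma supNorm_sub_nonneg (hK₁ : MemK h₁) (hK₂ : MemK h₂) : 0 ≤ supNorm (h₁ - h₂) :=
  le_trans (abs_nonneg _) (abs_le_supNorm hK₁ hK₂ le_rfl)

lemma exp_lipschitz {a b m : ℝ} (ha : m ≤ a) (hb : m ≤ b) :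
    |Real.exp (-a) - Real.exp (-b)| ≤ Real.exp (-m) * |a - b| := by
  wlog hab : b ≤ a generalizing a b
  · rw [abs_sub_comm, abs_sub_comm a b]; exact this hb ha (by linarith)
  have h1 : Real.exp (-a) ≤ Real.exp (-b) := Real.exp_le_exp.2 (by linarith)
  rw [abs_of_nonpos (by linarith), abs_of_nonneg (by linarith)]
  have k1 : 1 - (a - b) ≤ Real.exp (-(a - b)) := by
    have := Real.add_one_le_exp (-(a-b)); linarith
  have k2 : Real.exp (-b) * Real.exp (-(a - b)) = Real.exp (-a) := by
    rw [← Real.exp_add]; ring_nf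
  have k3 : (0:ℝ) < Real.exp (-b) := Real.exp_pos _
  have k4 : Real.exp (-b) ≤ Real.exp (-m) := Real.exp_le_exp.2 (by linarith)
  nlinarith [mul_le_mul_of_nonneg_left k1 k3.le]

end Aux4

section Aux5
variable {δ : ℝ} {h₁ h₂ : ℝ → ℝ}

lemma inv_psi_lip (hδ : 0 < δ) (hK₁ : MemK h₁) (hK₂ : MemK h₂) {x : ℝ} (hx : 0 ≤ x) :
    |1 / Psi δ h₁ x - 1 / Psi δ h₂ x| ≤ δ * supNorm (h₁ - h₂) := by
  have a1 : 1 ≤ Psi δ h₁ x := psi_one_le hδ hK₁ hx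
  have a2 : 1 ≤ Psi δ h₂ x := psi_one_le hδ hK₂ hx
  have key : 1 / Psi δ h₁ x - 1 / Psi δ h₂ x
      = (Psi δ h₂ x - Psi δ h₁ x) / (Psi δ h₁ x * Psi δ h₂ x) := by
    field_simp
  rw [key, abs_div]
  have hd : Psi δ h₂ x - Psi δ h₁ x = δ * (h₂ x - h₁ x) := by unfold Psi; ring
  have hnum : |Psi δ h₂ x - Psi δ h₁ x| ≤ δ * supNorm (h₁ - h₂) := by
    rw [hd, abs_mul, abs_of_pos hδ, abs_sub_comm]
    exact mul_le_mul_of_nonneg_left (abs_le_supNorm hK₁ hK₂ hx) hδ.le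
  have hden : 1 ≤ |Psi δ h₁ x * Psi δ h₂ x| := by
    rw [abs_of_pos (by nlinarith)]; nlinarith
  calc |Psi δ h₂ x - Psi δ h₁ x| / |Psi δ h₁ x * Psi δ h₂ x|
      ≤ |Psi δ h₂ x - Psi δ h₁ x| := div_le_self (abs_nonneg _) hden
    _ ≤ _ := hnum

end Aux5

section Aux6
variable {δ : ℝ} {h₁ h₂ : ℝ → ℝ}

lemma integrand_lip (hδ : 0 < δ) (hK₁ : MemK h₁) (hK₂ : MemK h₂) {x : ℝ} (hx : 0 ≤ x) :
    |x / Psi δ h₁ x - x / Psi δ h₂ x| ≤ δ * supNorm (h₁ - h₂) * x := by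
  have key : x / Psi δ h₁ x - x / Psi δ h₂ x = x * (1 / Psi δ h₁ x - 1 / Psi δ h₂ x) := by
    simp only [div_eq_mul_inv, one_mul]; ring
  rw [key, abs_mul, abs_of_nonneg hx, mul_comm]
  exact mul_le_mul_of_nonneg_right (inv_psi_lip hδ hK₁ hK₂ hx) hx

lemma A_lip (hδ : 0 < δ) (hK₁ : MemK h₁) (hK₂ : MemK h₂) {η : ℝ} (hη : 0 ≤ η) :
    |(∫ ξ in (0:ℝ)..η, ξ / Psi δ h₁ ξ) - ∫ ξ in (0:ℝ)..η, ξ / Psi δ h₂ ξ|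
      ≤ δ * supNorm (h₁ - h₂) * η ^ 2 / 2 := by
  have i1 := intervalIntegrable_integrand hδ hK₁ hη
  have i2 := intervalIntegrable_integrand hδ hK₂ hη
  rw [← intervalIntegral.integral_sub i1 i2]
  calc |∫ ξ in (0:ℝ)..η, (ξ / Psi δ h₁ ξ - ξ / Psi δ h₂ ξ)|
      ≤ ∫ ξ in (0:ℝ)..η, |ξ / Psi δ h₁ ξ - ξ / Psi δ h₂ ξ| :=
        intervalIntegral.abs_integral_le_integral_abs hη
    _ ≤ ∫ ξ in (0:ℝ)..η, δ * supNorm (h₁ - h₂) * ξ := by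
        refine integral_mono_on hη ((i1.sub i2).abs) ?_ (fun x hx => integrand_lip hδ hK₁ hK₂ hx.1)
        exact (intervalIntegrable_id).const_mul _
    _ = δ * supNorm (h₁ - h₂) * η ^ 2 / 2 := by
        rw [intervalIntegral.integral_const_mul, integral_id]
        ring

lemma F_lip (hδ : 0 < δ) (hK₁ : MemK h₁) (hK₂ : MemK h₂) {η : ℝ} (hη : 0 ≤ η) :
    |F δ h₁ η - F δ h₂ η|
      ≤ δ * supNorm (h₁ - h₂) * ((1 + η ^ 2) * Real.exp (-(1 + δ)⁻¹ * η ^ 2)) := by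
  set s := supNorm (h₁ - h₂) with hs
  have hs0 : 0 ≤ s := supNorm_sub_nonneg hK₁ hK₂
  set A₁ := ∫ ξ in (0:ℝ)..η, ξ / Psi δ h₁ ξ
  set A₂ := ∫ ξ in (0:ℝ)..η, ξ / Psi δ h₂ ξ
  have key : F δ h₁ η - F δ h₂ η
      = (1 / Psi δ h₁ η) * (Real.exp (-2 * A₁) - Real.exp (-2 * A₂))
        + (1 / Psi δ h₁ η - 1 / Psi δ h₂ η) * Real.exp (-2 * A₂) := by
    unfold F; ring
  have p1 : 1 ≤ Psi δ h₁ η := psi_one_le hδ hK₁ hη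
  have hb1 : |1 / Psi δ h₁ η| ≤ 1 := by
    rw [abs_of_pos (by positivity)]
    rw [div_le_one (by linarith)]; exact p1
  have hm : (1 + δ)⁻¹ * η ^ 2 ≤ 2 * A₁ ∧ (1 + δ)⁻¹ * η ^ 2 ≤ 2 * A₂ := by
    constructor
    · have := le_A hδ hK₁ hη
      have heq : (1 + δ)⁻¹ * η ^ 2 = 2 * (η ^ 2 / (2 * (1 + δ))) := by field_simp
      rw [heq]; linarith
    · have := le_A hδ hK₂ hη
      have heq : (1 + δ)⁻¹ * η ^ 2 = 2 * (η ^ 2 / (2 * (1 + δ))) := by field_simp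
      rw [heq]; linarith
  have he : |Real.exp (-2 * A₁) - Real.exp (-2 * A₂)|
      ≤ Real.exp (-((1 + δ)⁻¹ * η ^ 2)) * |2 * A₁ - 2 * A₂| := by
    have := exp_lipschitz (m := (1 + δ)⁻¹ * η ^ 2) hm.1 hm.2
    simpa [neg_mul] using this
  have hA : |2 * A₁ - 2 * A₂| ≤ δ * s * η ^ 2 := by
    have := A_lip hδ hK₁ hK₂ hη
    have e1 : (2:ℝ) * A₁ - 2 * A₂ = 2 * (A₁ - A₂) := by ring
    have e2 : |2 * A₁ - 2 * A₂| = 2 * |A₁ - A₂| := by rw [e1, abs_mul, abs_two]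
    rw [e2]
    linarith [this]
  have hinv := inv_psi_lip hδ hK₁ hK₂ hη
  have he2 : |Real.exp (-2 * A₂)| ≤ Real.exp (-(1 + δ)⁻¹ * η ^ 2) := by
    rw [abs_of_pos (Real.exp_pos _)]
    apply Real.exp_le_exp.2
    nlinarith [hm.2]
  calc |F δ h₁ η - F δ h₂ η|
      ≤ |1 / Psi δ h₁ η| * |Real.exp (-2 * A₁) - Real.exp (-2 * A₂)|
        + |1 / Psi δ h₁ η - 1 / Psi δ h₂ η| * |Real.exp (-2 * A₂)| := by
        rw [key]
        exact (abs_add_le _ _).trans (by rw [abs_mul, abs_mul])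
    _ ≤ 1 * (Real.exp (-((1 + δ)⁻¹ * η ^ 2)) * (δ * s * η ^ 2))
        + (δ * s) * Real.exp (-(1 + δ)⁻¹ * η ^ 2) := by
        apply add_le_add
        · exact mul_le_mul hb1
            (he.trans (mul_le_mul_of_nonneg_left hA (Real.exp_pos _).le))
            (abs_nonneg _) zero_le_one
        · exact mul_le_mul hinv he2 (abs_nonneg _) (by positivity)
    _ ≤ δ * s * ((1 + η ^ 2) * Real.exp (-(1 + δ)⁻¹ * η ^ 2)) := by
        rw [neg_mul]
        nlinarith [Real.exp_pos (-((1 + δ)⁻¹ * η ^ 2))]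

end Aux6

section Aux7
variable {δ : ℝ} {h h₁ h₂ : ℝ → ℝ}

lemma integrableOn_gauss {b : ℝ} (hb : 0 < b) :
    IntegrableOn (fun η : ℝ => Real.exp (-b * η ^ 2)) (Ioi 0) volume :=
  (integrable_exp_neg_mul_sq hb).integrableOn

lemma integrableOn_sq_gauss {b : ℝ} (hb : 0 < b) :
    IntegrableOn (fun η : ℝ => η ^ 2 * Real.exp (-b * η ^ 2)) (Ioi 0) volume := by
  refine ((integrable_rpow_mul_exp_neg_mul_sq hb (s := 2) (by norm_num)).integrableOn).congr_fun
    (fun x hx => ?_) measurableSet_Ioi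
  beta_reduce
  rw [show ((2:ℝ) = ((2:ℕ):ℝ)) by norm_num, Real.rpow_natCast]

lemma integrableOn_F (hδ : 0 < δ) (hK : MemK h) : IntegrableOn (F δ h) (Ioi 0) volume := by
  have hb : (0:ℝ) < (1 + δ)⁻¹ := by positivity
  refine Integrable.mono' (integrableOn_gauss hb)
    (((continuousOn_F hδ hK).mono Ioi_subset_Ici_self).aestronglyMeasurable measurableSet_Ioi) ?_
  filter_upwards [ae_restrict_mem measurableSet_Ioi] with η hη
  rw [Real.norm_eq_abs, abs_of_nonneg (F_nonneg hδ hK (le_of_lt hη))]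
  exact F_le hδ hK (le_of_lt hη)

lemma integral_gauss_Ioi_val {b : ℝ} (hb : 0 < b) :
    ∫ η in Ioi (0:ℝ), Real.exp (-b * η ^ 2) = √(π / b) / 2 := integral_gaussian_Ioi b

lemma integral_sq_gauss_Ioi_val {b : ℝ} (hb : 0 < b) :
    ∫ η in Ioi (0:ℝ), η ^ 2 * Real.exp (-b * η ^ 2) = b ^ (-(3:ℝ)/2) * √π / 4 := by
  have key : ∫ η in Ioi (0:ℝ), η ^ (2:ℝ) * Real.exp (-b * η ^ (2:ℝ))
      = b ^ (-((2:ℝ) + 1) / 2) * (1 / 2) * Real.Gamma (((2:ℝ) + 1) / 2) :=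
    integral_rpow_mul_exp_neg_mul_rpow two_pos (by norm_num) hb
  have heq : ∫ η in Ioi (0:ℝ), η ^ (2:ℝ) * Real.exp (-b * η ^ (2:ℝ))
      = ∫ η in Ioi (0:ℝ), η ^ 2 * Real.exp (-b * η ^ 2) := by
    refine setIntegral_congr_fun measurableSet_Ioi (fun x hx => ?_)
    rw [show ((2:ℝ) = ((2:ℕ):ℝ)) by norm_num, Real.rpow_natCast]
  have hGamma : Real.Gamma (((2:ℝ) + 1) / 2) = √π / 2 := by
    have : ((2:ℝ) + 1) / 2 = 1 / 2 + 1 := by norm_num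
    rw [this, Real.Gamma_add_one (by norm_num), Real.Gamma_one_half_eq]
    ring
  rw [heq, hGamma] at key
  rw [key]
  rw [show (-((2:ℝ) + 1) / 2) = -(3:ℝ)/2 by norm_num]
  ring

end Aux7

section Aux8
variable {δ : ℝ} {h h₁ h₂ : ℝ → ℝ}

lemma inv_rpow_neg_three_halves {c : ℝ} (hc : 0 < c) :
    (c⁻¹) ^ (-(3:ℝ)/2) = c ^ ((3:ℝ)/2) := by
  rw [show (-(3:ℝ)/2) = -((3:ℝ)/2) by norm_num, Real.inv_rpow hc.le,
    Real.rpow_neg hc.le, inv_inv]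

lemma Itot_le (hδ : 0 < δ) (hK : MemK h) : Itot δ h ≤ √(π * (1 + δ)) / 2 := by
  have hb : (0:ℝ) < (1 + δ)⁻¹ := by positivity
  have step : Itot δ h ≤ ∫ η in Ioi (0:ℝ), Real.exp (-(1 + δ)⁻¹ * η ^ 2) := by
    refine setIntegral_mono_on (integrableOn_F hδ hK) (integrableOn_gauss hb)
      measurableSet_Ioi (fun η hη => F_le hδ hK (le_of_lt hη))
  have hval := integral_gauss_Ioi_val hb
  rw [hval] at step
  have hpp : π / (1 + δ)⁻¹ = π * (1 + δ) := by field_simp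
  rwa [hpp] at step

lemma le_Itot (hδ : 0 < δ) (hK : MemK h) : √π / (2 * (1 + δ)) ≤ Itot δ h := by
  have step : (∫ η in Ioi (0:ℝ), (1 + δ)⁻¹ * Real.exp (-1 * η ^ 2)) ≤ Itot δ h := by
    refine setIntegral_mono_on ((integrableOn_gauss one_pos).const_mul _)
      (integrableOn_F hδ hK) measurableSet_Ioi (fun η hη => le_F hδ hK (le_of_lt hη))
  rw [MeasureTheory.integral_const_mul, integral_gauss_Ioi_val one_pos] at step
  have hπ : √(π / 1) = √π := by rw [div_one]
  rw [hπ] at step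
  calc √π / (2 * (1 + δ)) = (1 + δ)⁻¹ * (√π / 2) := by
        rw [inv_mul_eq_div, div_div]
    _ ≤ Itot δ h := step

lemma Itot_pos (hδ : 0 < δ) (hK : MemK h) : 0 < Itot δ h :=
  lt_of_lt_of_le (by positivity) (le_Itot hδ hK)

noncomputable def Mc (δ : ℝ) : ℝ := √(π * (1 + δ)) / 2 + (1 + δ) ^ ((3:ℝ)/2) * √π / 4

lemma integral_bound_val (hδ : 0 < δ) :
    ∫ η in Ioi (0:ℝ), (1 + η ^ 2) * Real.exp (-(1 + δ)⁻¹ * η ^ 2) = Mc δ := by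
  have hb : (0:ℝ) < (1 + δ)⁻¹ := by positivity
  have heq : ∫ η in Ioi (0:ℝ), (1 + η ^ 2) * Real.exp (-(1 + δ)⁻¹ * η ^ 2)
      = ∫ η in Ioi (0:ℝ), (Real.exp (-(1 + δ)⁻¹ * η ^ 2)
          + η ^ 2 * Real.exp (-(1 + δ)⁻¹ * η ^ 2)) := by
    refine setIntegral_congr_fun measurableSet_Ioi (fun x _ => ?_)
    ring
  rw [heq, MeasureTheory.integral_add (integrableOn_gauss hb) (integrableOn_sq_gauss hb),
    integral_gauss_Ioi_val hb, integral_sq_gauss_Ioi_val hb,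
    inv_rpow_neg_three_halves (by positivity : (0:ℝ) < 1 + δ),]
  have hpp : π / (1 + δ)⁻¹ = π * (1 + δ) := by field_simp
  rw [hpp]
  rfl

lemma Itot_diff_le (hδ : 0 < δ) (hK₁ : MemK h₁) (hK₂ : MemK h₂) :
    |Itot δ h₁ - Itot δ h₂| ≤ δ * supNorm (h₁ - h₂) * Mc δ := by
  have hb : (0:ℝ) < (1 + δ)⁻¹ := by positivity
  have hs0 : 0 ≤ supNorm (h₁ - h₂) := supNorm_sub_nonneg hK₁ hK₂
  have i1 := integrableOn_F hδ hK₁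
  have i2 := integrableOn_F hδ hK₂
  have hsub : Itot δ h₁ - Itot δ h₂ = ∫ η in Ioi (0:ℝ), (F δ h₁ η - F δ h₂ η) := by
    rw [MeasureTheory.integral_sub i1 i2]; rfl
  rw [hsub]
  have habs : |∫ η in Ioi (0:ℝ), (F δ h₁ η - F δ h₂ η)|
      ≤ ∫ η in Ioi (0:ℝ), |F δ h₁ η - F δ h₂ η| := by
    simpa [Real.norm_eq_abs] using
      MeasureTheory.norm_integral_le_integral_norm (fun η => F δ h₁ η - F δ h₂ η)
        (μ := volume.restrict (Ioi 0))
  refine habs.trans ?_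
  have hbint : IntegrableOn
      (fun η : ℝ => δ * supNorm (h₁ - h₂) * ((1 + η ^ 2) * Real.exp (-(1 + δ)⁻¹ * η ^ 2)))
      (Ioi 0) volume := by
    refine Integrable.const_mul ?_ _
    have : (fun η : ℝ => (1 + η ^ 2) * Real.exp (-(1 + δ)⁻¹ * η ^ 2))
        = fun η : ℝ => Real.exp (-(1 + δ)⁻¹ * η ^ 2) + η ^ 2 * Real.exp (-(1 + δ)⁻¹ * η ^ 2) := by
      funext x; ring
    rw [this]
    exact (integrableOn_gauss hb).add (integrableOn_sq_gauss hb)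
  have step : (∫ η in Ioi (0:ℝ), |F δ h₁ η - F δ h₂ η|)
      ≤ ∫ η in Ioi (0:ℝ),
          δ * supNorm (h₁ - h₂) * ((1 + η ^ 2) * Real.exp (-(1 + δ)⁻¹ * η ^ 2)) :=
    setIntegral_mono_on ((i1.sub i2).abs) hbint measurableSet_Ioi
      (fun η hη => F_lip hδ hK₁ hK₂ (le_of_lt hη))
  refine step.trans ?_
  rw [MeasureTheory.integral_const_mul, integral_bound_val hδ]

end Aux8

section Aux9
variable {δ : ℝ} {h h₁ h₂ : ℝ → ℝ}

lemma intervalIntegrable_F (hδ : 0 < δ) (hK : MemK h) {x : ℝ} (hx : 0 ≤ x) :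
    IntervalIntegrable (F δ h) volume 0 x :=
  ((continuousOn_F hδ hK).mono (by rw [uIcc_of_le hx]; exact Icc_subset_Ici_self)).intervalIntegrable

lemma interval_le_Ioi {g : ℝ → ℝ} (hint : IntegrableOn g (Ioi 0) volume)
    (hg : ∀ η > (0:ℝ), 0 ≤ g η) {x : ℝ} (hx : 0 ≤ x)
    (hgi : IntervalIntegrable g volume 0 x) :
    (∫ η in (0:ℝ)..x, g η) ≤ ∫ η in Ioi (0:ℝ), g η := by
  rw [intervalIntegral.integral_of_le hx]
  refine setIntegral_mono_set hint ?_ (HasSubset.Subset.eventuallyLE Ioc_subset_Ioi_self)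
  filter_upwards [ae_restrict_mem measurableSet_Ioi] with η hη
  exact hg η hη

lemma J_nonneg (hδ : 0 < δ) (hK : MemK h) {x : ℝ} (hx : 0 ≤ x) :
    0 ≤ ∫ η in (0:ℝ)..x, F δ h η :=
  intervalIntegral.integral_nonneg hx (fun η hη => F_nonneg hδ hK hη.1)

lemma J_le_Itot (hδ : 0 < δ) (hK : MemK h) {x : ℝ} (hx : 0 ≤ x) :
    (∫ η in (0:ℝ)..x, F δ h η) ≤ Itot δ h :=
  interval_le_Ioi (integrableOn_F hδ hK) (fun η hη => F_nonneg hδ hK hη.le) hx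
    (intervalIntegrable_F hδ hK hx)

lemma J_diff_le (hδ : 0 < δ) (hK₁ : MemK h₁) (hK₂ : MemK h₂) {x : ℝ} (hx : 0 ≤ x) :
    |(∫ η in (0:ℝ)..x, F δ h₁ η) - ∫ η in (0:ℝ)..x, F δ h₂ η|
      ≤ δ * supNorm (h₁ - h₂) * Mc δ := by
  have hb : (0:ℝ) < (1 + δ)⁻¹ := by positivity
  have hs0 : 0 ≤ supNorm (h₁ - h₂) := supNorm_sub_nonneg hK₁ hK₂
  have i1 := intervalIntegrable_F hδ hK₁ hx
  have i2 := intervalIntegrable_F hδ hK₂ hx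
  rw [← intervalIntegral.integral_sub i1 i2]
  set s := supNorm (h₁ - h₂)
  have bcont : Continuous
      (fun η : ℝ => δ * s * ((1 + η ^ 2) * Real.exp (-(1 + δ)⁻¹ * η ^ 2))) := by
    continuity
  calc |∫ η in (0:ℝ)..x, (F δ h₁ η - F δ h₂ η)|
      ≤ ∫ η in (0:ℝ)..x, |F δ h₁ η - F δ h₂ η| :=
        intervalIntegral.abs_integral_le_integral_abs hx
    _ ≤ ∫ η in (0:ℝ)..x, δ * s * ((1 + η ^ 2) * Real.exp (-(1 + δ)⁻¹ * η ^ 2)) := by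
        refine integral_mono_on hx ((i1.sub i2).abs) (bcont.intervalIntegrable 0 x)
          (fun η hη => F_lip hδ hK₁ hK₂ hη.1)
    _ ≤ ∫ η in Ioi (0:ℝ), δ * s * ((1 + η ^ 2) * Real.exp (-(1 + δ)⁻¹ * η ^ 2)) := by
        refine interval_le_Ioi ?_ (fun η hη => by positivity) hx (bcont.intervalIntegrable 0 x)
        refine Integrable.const_mul ?_ _
        have : (fun η : ℝ => (1 + η ^ 2) * Real.exp (-(1 + δ)⁻¹ * η ^ 2))
            = fun η : ℝ => Real.exp (-(1 + δ)⁻¹ * η ^ 2)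
                + η ^ 2 * Real.exp (-(1 + δ)⁻¹ * η ^ 2) := by
          funext y; ring
        rw [this]
        exact (integrableOn_gauss hb).add (integrableOn_sq_gauss hb)
    _ = δ * s * Mc δ := by rw [MeasureTheory.integral_const_mul, integral_bound_val hδ]

end Aux9

section Aux10
variable {δ : ℝ}

lemma rpow_three_halves {c : ℝ} (hc : 0 ≤ c) : c ^ ((3:ℝ)/2) = √c ^ 3 := by
  rw [Real.sqrt_eq_rpow, ← Real.rpow_natCast (c ^ ((1:ℝ)/2)) 3, ← Real.rpow_mul hc]
  norm_num

lemma final_alg (hδ : 0 < δ) :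
    2 * (Mc δ / (√π / (2 * (1 + δ)))) = (1 + δ) ^ ((3:ℝ)/2) * (3 + δ) := by
  have hc : (0:ℝ) < 1 + δ := by linarith
  have hp : (0:ℝ) < √π := Real.sqrt_pos.2 pi_pos
  have h32 : (1 + δ) ^ ((3:ℝ)/2) = √(1 + δ) ^ 3 := rpow_three_halves hc.le
  have hmul : √(π * (1 + δ)) = √π * √(1 + δ) := Real.sqrt_mul pi_pos.le _
  rw [Mc, h32, hmul]
  set r := √(1 + δ) with hrdef
  have hr0 : 0 < r := Real.sqrt_pos.2 hc
  have hr : r ^ 2 = 1 + δ := Real.sq_sqrt hc.le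
  rw [← hr]
  field_simp
  linear_combination 4 * hr

lemma gamma_lt_one (δ₁ : ℝ) (hpos : 0 < δ₁)
    (hroot : δ₁ / 2 * (1 + δ₁) ^ ((3:ℝ)/2) * (3 + δ₁) * (1 + (1 + δ₁) ^ ((3:ℝ)/2)) = 1)
    (hδ : 0 < δ) (hδ₁ : δ < δ₁) :
    δ / 2 * (1 + δ) ^ ((3:ℝ)/2) * (3 + δ) * (1 + (1 + δ) ^ ((3:ℝ)/2)) < 1 := by
  set a := (1 + δ) ^ ((3:ℝ)/2) with ha
  set a₁ := (1 + δ₁) ^ ((3:ℝ)/2) with ha₁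
  have h1a : 1 ≤ a := Real.one_le_rpow (by linarith) (by norm_num)
  have haa : a ≤ a₁ := Real.rpow_le_rpow (by linarith) (by linarith) (by norm_num)
  have step1 : δ / 2 * a * (3 + δ) * (1 + a) ≤ δ / 2 * a₁ * (3 + δ₁) * (1 + a₁) := by
    gcongr <;> positivity
  have step2 : δ / 2 * a₁ * (3 + δ₁) * (1 + a₁) < δ₁ / 2 * a₁ * (3 + δ₁) * (1 + a₁) := by
    have h3 : (0:ℝ) < a₁ * (3 + δ₁) * (1 + a₁) := by positivity
    nlinarith
  linarith [hroot ▸ (step1.trans_lt step2)]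

end Aux10

section Aux11
variable {δ : ℝ} {h₁ h₂ : ℝ → ℝ}

lemma pointwise_bound (hδ : 0 < δ) (hK₁ : MemK h₁) (hK₂ : MemK h₂) {x : ℝ} (hx : 0 ≤ x) :
    |Ch δ h₁ * (∫ η in (0:ℝ)..x, F δ h₁ η) - Ch δ h₂ * (∫ η in (0:ℝ)..x, F δ h₂ η)|
      ≤ (δ * ((1 + δ) ^ ((3:ℝ)/2) * (3 + δ))) * supNorm (h₁ - h₂) := by
  set s := supNorm (h₁ - h₂) with hsdef
  have hs0 : 0 ≤ s := supNorm_sub_nonneg hK₁ hK₂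
  set I₁ := Itot δ h₁ with hI₁def
  set I₂ := Itot δ h₂ with hI₂def
  set J₁ := ∫ η in (0:ℝ)..x, F δ h₁ η with hJ₁def
  set J₂ := ∫ η in (0:ℝ)..x, F δ h₂ η with hJ₂def
  have hI₁ : 0 < I₁ := Itot_pos hδ hK₁
  have hI₂ : 0 < I₂ := Itot_pos hδ hK₂
  set L : ℝ := √π / (2 * (1 + δ)) with hLdef
  have hL : (0:ℝ) < L := by
    have : (0:ℝ) < √π := Real.sqrt_pos.2 pi_pos
    positivity
  have hIl1 : L ≤ I₁ := le_Itot hδ hK₁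
  have hIl2 : L ≤ I₂ := le_Itot hδ hK₂
  have hJd : |J₁ - J₂| ≤ δ * s * Mc δ := J_diff_le hδ hK₁ hK₂ hx
  have hId : |I₂ - I₁| ≤ δ * s * Mc δ := by
    rw [abs_sub_comm]
    exact Itot_diff_le hδ hK₁ hK₂
  have hJ₂0 : 0 ≤ J₂ := J_nonneg hδ hK₂ hx
  have hJ₂I : J₂ ≤ I₂ := J_le_Itot hδ hK₂ hx
  have hMc : 0 ≤ Mc δ := by
    have h32 : (0:ℝ) ≤ (1 + δ) ^ ((3:ℝ)/2) := Real.rpow_nonneg (by linarith) _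
    have : (0:ℝ) ≤ √(π * (1 + δ)) := Real.sqrt_nonneg _
    have hp : (0:ℝ) ≤ √π := Real.sqrt_nonneg _
    rw [Mc]; positivity
  have key : Ch δ h₁ * J₁ - Ch δ h₂ * J₂
      = (J₁ - J₂) / I₁ + ((I₂ - I₁) * J₂) / (I₁ * I₂) := by
    show I₁⁻¹ * J₁ - I₂⁻¹ * J₂ = _
    field_simp
    ring
  rw [key]
  have T1 : |(J₁ - J₂) / I₁| ≤ δ * s * Mc δ / L := by
    rw [abs_div, abs_of_pos hI₁]
    exact div_le_div₀ (by positivity) hJd hL hIl1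
  have T2 : |((I₂ - I₁) * J₂) / (I₁ * I₂)| ≤ δ * s * Mc δ / L := by
    rw [abs_div, abs_mul, abs_of_pos (by positivity : (0:ℝ) < I₁ * I₂),
      abs_of_nonneg hJ₂0]
    rw [div_le_div_iff₀ (by positivity) hL]
    have h1 : |I₂ - I₁| * J₂ * L ≤ (δ * s * Mc δ) * I₂ * I₁ := by
      have b1 : |I₂ - I₁| * J₂ ≤ (δ * s * Mc δ) * I₂ :=
        mul_le_mul hId hJ₂I hJ₂0 (by positivity)
      have b2 : |I₂ - I₁| * J₂ * L ≤ (δ * s * Mc δ) * I₂ * I₁ := by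
        calc |I₂ - I₁| * J₂ * L ≤ ((δ * s * Mc δ) * I₂) * L := by
              exact mul_le_mul_of_nonneg_right b1 hL.le
          _ ≤ ((δ * s * Mc δ) * I₂) * I₁ :=
              mul_le_mul_of_nonneg_left hIl1 (by positivity)
      exact b2
    nlinarith [h1]
  have total : |(J₁ - J₂) / I₁ + ((I₂ - I₁) * J₂) / (I₁ * I₂)|
      ≤ 2 * (δ * s * Mc δ / L) := by
    calc |(J₁ - J₂) / I₁ + ((I₂ - I₁) * J₂) / (I₁ * I₂)|
        ≤ |(J₁ - J₂) / I₁| + |((I₂ - I₁) * J₂) / (I₁ * I₂)| := abs_add_le _ _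
      _ ≤ 2 * (δ * s * Mc δ / L) := by linarith
  refine total.trans ?_
  have halg := final_alg hδ
  have : 2 * (δ * s * Mc δ / L) = (δ * s) * (2 * (Mc δ / L)) := by ring
  rw [this, halg]
  exact le_of_eq (by ring)

end Aux11


theorem tau_contraction (δ₁ : ℝ) (hpos : 0 < δ₁)
    (hroot : δ₁ / 2 * (1 + δ₁) ^ ((3:ℝ)/2) * (3 + δ₁) *
      (1 + (1 + δ₁) ^ ((3:ℝ)/2)) = 1)
    (δ : ℝ) (hδ : 0 < δ) (hδ₁ : δ < δ₁) :
    ∃ γ : ℝ, 0 ≤ γ ∧ γ < 1 ∧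
      ∀ h₁ h₂ : ℝ → ℝ, MemK h₁ → MemK h₂ →
        supNorm ((fun x => Ch δ h₁ * ∫ η in (0:ℝ)..x, F δ h₁ η) -
                 (fun x => Ch δ h₂ * ∫ η in (0:ℝ)..x, F δ h₂ η)) ≤
          γ * supNorm (h₁ - h₂) := by
  set a := (1 + δ) ^ ((3:ℝ)/2) with ha
  have h1a : 1 ≤ a := Real.one_le_rpow (by linarith) (by norm_num)
  refine ⟨δ / 2 * a * (3 + δ) * (1 + a), by positivity,
    gamma_lt_one δ₁ hpos hroot hδ hδ₁, ?_⟩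
  intro h₁ h₂ hK₁ hK₂
  have hs0 : 0 ≤ supNorm (h₁ - h₂) := supNorm_sub_nonneg hK₁ hK₂
  haveI : Nonempty (Set.Ici (0:ℝ)) := ⟨⟨0, Set.mem_Ici.2 le_rfl⟩⟩
  refine ciSup_le ?_
  rintro ⟨x, hx⟩
  have hb := pointwise_bound hδ hK₁ hK₂ (show (0:ℝ) ≤ x from hx)
  have hcoef : δ * (a * (3 + δ)) ≤ δ / 2 * a * (3 + δ) * (1 + a) := by
    have key : 0 ≤ δ * (a * (3 + δ)) * (a - 1) :=
      mul_nonneg (by positivity) (by linarith)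
    nlinarith [key]
  calc |((fun x => Ch δ h₁ * ∫ η in (0:ℝ)..x, F δ h₁ η) -
        (fun x => Ch δ h₂ * ∫ η in (0:ℝ)..x, F δ h₂ η)) (x : ℝ)|
      = |Ch δ h₁ * (∫ η in (0:ℝ)..x, F δ h₁ η)
          - Ch δ h₂ * (∫ η in (0:ℝ)..x, F δ h₂ η)| := by simp [Pi.sub_apply]
    _ ≤ (δ * (a * (3 + δ))) * supNorm (h₁ - h₂) := hb
    _ ≤ (δ / 2 * a * (3 + δ) * (1 + a)) * supNorm (h₁ - h₂) :=
        mul_le_mul_of_nonneg_right hcoef hs0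
end
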